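/- arXiv:2208.09159 — 4 statements merged into one kernel-verified Lean document; each statement's English description precedes it below -/
import Mathlib

section
/- Let α, β, γ be nonnegative integers with β ≥ 1 and α ≤ γ. If γ + 1 ≥ 2β, then (1/2^{α+1}) C(α, β) + Σ_{t=α+1}^{γ} (1/2^t) C(t-1, β-1) ≥ Σ_{t=α}^{γ} (1/2^{t+2}) C(t+1, β). -/
lemma key_identity (α b : ℕ) : ∀ γ, α ≤ γ →
    (∑ t ∈ Finset.Icc α γ, (1 / 2 ^ (t + 2) : ℝ) * (Nat.choose (t + 1) (b + 1)))
      + (1 / 2 ^ (γ + 2)) * (Nat.choose (γ + 1) (b + 1)) =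
    (1 / 2 ^ (α + 1) : ℝ) * (Nat.choose α (b + 1)) +
      (∑ t ∈ Finset.Icc (α + 1) γ, (1 / 2 ^ t : ℝ) * (Nat.choose (t - 1) b))
      + (1 / 2 ^ (γ + 1)) * (Nat.choose γ b) := by
  intro γ
  induction γ with
  | zero =>
      intro hα
      interval_cases α
      simp [Nat.choose_succ_succ]
      push_cast
      ring
  | succ γ ih =>
      intro hα
      rcases Nat.lt_or_ge α (γ + 1) with hlt | hge
      · have hαγ : α ≤ γ := Nat.lt_succ_iff.mp hlt
        have h1 : α ≤ γ + 1 := hαγ.trans (Nat.le_succ γ)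
        have h2 : α + 1 ≤ γ + 1 := Nat.succ_le_succ hαγ
        rw [Finset.sum_Icc_succ_top h1, Finset.sum_Icc_succ_top h2]
        have hih := ih hαγ
        have pascal : (Nat.choose (γ + 2) (b + 1) : ℝ)
            = Nat.choose (γ + 1) b + Nat.choose (γ + 1) (b + 1) := by
          rw [Nat.choose_succ_succ (γ + 1) b]; push_cast; ring
        have pascal2 : (Nat.choose (γ + 1) (b + 1) : ℝ)
            = Nat.choose γ b + Nat.choose γ (b + 1) := by
          rw [Nat.choose_succ_succ γ b]; push_cast; ring
        simp only [Nat.add_sub_cancel]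
        linear_combination hih + (1 / 2 ^ (γ + 2) : ℝ) * pascal
      · have : α = γ + 1 := le_antisymm hα hge
        subst this
        simp [Nat.choose_succ_succ (γ + 1) b]
        push_cast
        ring

lemma choose_step (b γ : ℕ) (h : 2 * b + 1 ≤ γ) :
    Nat.choose γ b ≤ Nat.choose γ (b + 1) := by
  rcases Nat.lt_or_ge (2 * b + 1) γ with hlt | hge
  · apply Nat.choose_le_succ_of_lt_half_left
    omega
  · have : γ = 2 * b + 1 := le_antisymm hge h
    subst this
    have := Nat.choose_symm (n := 2 * b + 1) (k := b + 1) (by omega)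
    have heq : 2 * b + 1 - (b + 1) = b := by omega
    rw [heq] at this
    exact this.le

theorem pair_removal_binomial_inequality (α β γ : ℕ) (hβ : 1 ≤ β) (hαγ : α ≤ γ)
    (h : 2 * β ≤ γ + 1) :
    ∑ t ∈ Finset.Icc α γ, (1 / 2 ^ (t + 2) : ℝ) * (Nat.choose (t + 1) β) ≤
      (1 / 2 ^ (α + 1) : ℝ) * (Nat.choose α β) +
        ∑ t ∈ Finset.Icc (α + 1) γ, (1 / 2 ^ t : ℝ) * (Nat.choose (t - 1) (β - 1)) := by
  obtain ⟨b, rfl⟩ : ∃ b, β = b + 1 := ⟨β - 1, (Nat.succ_pred_eq_of_pos hβ).symm⟩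
  simp only [Nat.add_sub_cancel]
  have hid := key_identity α b γ hαγ
  have hc : (Nat.choose γ b : ℝ) ≤ Nat.choose γ (b + 1) := by
    exact_mod_cast choose_step b γ (by omega)
  have pascal : (Nat.choose (γ + 1) (b + 1) : ℝ)
      = Nat.choose γ b + Nat.choose γ (b + 1) := by
    rw [Nat.choose_succ_succ γ b]; push_cast; ring
  have hpow : (0:ℝ) < (2:ℝ) ^ (γ + 2) := by positivity
  have hpow2 : (1 / 2 ^ (γ + 1) : ℝ) * (Nat.choose γ b)
      ≤ (1 / 2 ^ (γ + 2)) * (Nat.choose (γ + 1) (b + 1)) := by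
    have e : (1 / 2 ^ (γ + 2) : ℝ) = (1 / 2 ^ (γ + 1)) / 2 := by
      rw [pow_succ]; ring
    have hp : (0:ℝ) < (1 / 2 ^ (γ + 1) : ℝ) := by positivity
    rw [pascal, e]
    nlinarith [mul_nonneg hp.le (sub_nonneg.mpr hc)]
  linarith
end

section
/- Let a_1 > a_2 > ... > a_{2n} be distinct reals placed on n cards (a perfect pairing of the 2n values), and independently for each card one side is designated 'face-down' (X) and the other 'face-up' (Y), each with probability 1/2. Suppose the top i+j+1 values a_1, ..., a_{i+j+1} all lie on distinct cards. Let X^{i+1} be the (i+1)-st largest face-down value and Y^{j+1} the (j+1)-st largest face-up value. Then Pr[X^{i+1} > Y^{j+1}] = Σ_{k=0}^{j} C(i+k, k)/2^{i+k+1}. -/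
/-
Since `a` is decreasing, index order is value order. Put `m = i + j + 1` and let `t` be the
number of face-down values among `a_1, …, a_m`. If `t ≥ i + 1`, then `X^{i+1}` lies among the
top `m` values while at most `j` face-up values do, so `X^{i+1} > a_{m+1} ≥ Y^{j+1}`; if `t ≤ i`
the roles are reversed. The event is thus "at least `i + 1` of the top `m` values are face-down".
As these values lie on distinct cards, their sides are `m` independent fair coins, and the
`(i+1)`-st head among them falls at toss `i + k + 1` with probability `C(i+k, k) / 2^(i+k+1)`.
-/

open scoped Classical

/-- The `k`-th largest element (1-indexed) of a finite set of reals, defaulting to `0`. -/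
noncomputable def kthLargest (s : Finset ℝ) (k : ℕ) : ℝ :=
  ((s.sort (· ≤ ·)).reverse).getD (k - 1) 0

/-- The probability of an event under the uniform distribution on a finite type. -/
noncomputable def uniformPr {α : Type*} [Fintype α] (E : α → Prop) : ℝ :=
  ((Finset.univ.filter E).card : ℝ) / (Fintype.card α : ℝ)

open Finset

theorem kthLargest_eq_orderEmbOfFin (s : Finset ℝ) {k : ℕ} (hk : 0 < k) (hks : k ≤ #s) :
    kthLargest s k = s.orderEmbOfFin rfl ⟨#s - k, by omega⟩ := by
  rw [kthLargest, orderEmbOfFin_apply, List.getD_eq_getElem _ _ (by simp; omega),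
    List.getElem_reverse]
  congr 1
  simp only [length_sort]
  omega

theorem lt_kthLargest_iff {s : Finset ℝ} {k : ℕ} (hk : 0 < k) (hks : k ≤ #s) (c : ℝ) :
    c < kthLargest s k ↔ k ≤ #{x ∈ s | c < x} := by
  set e := s.orderEmbOfFin rfl
  have hcount : #{x ∈ s | c < x} = #{q | c < e q} := by
    conv_lhs => rw [← map_orderEmbOfFin_univ s rfl, filter_map, card_map]
    rfl
  rw [kthLargest_eq_orderEmbOfFin s hk hks, hcount]
  constructor
  · intro h
    calc k = #(Ici (⟨#s - k, by omega⟩ : Fin #s)) := by rw [Fin.card_Ici, Fin.val_mk]; omega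
      _ ≤ _ := card_le_card fun q hq => by
        simp only [mem_Ici, mem_filter, mem_univ, true_and] at hq ⊢
        exact h.trans_le (e.monotone hq)
  · intro h
    by_contra hle
    have hsub : ({q | c < e q} : Finset (Fin #s)) ⊆ Ioi ⟨#s - k, by omega⟩ := fun q hq => by
      simp only [mem_Ioi, mem_filter, mem_univ, true_and] at hq ⊢
      exact e.lt_iff_lt.1 ((not_lt.1 hle).trans_lt hq)
    have := card_le_card hsub
    rw [Fin.card_Ioi, Fin.val_mk] at this
    omega

theorem lt_kthLargest_image_iff {ι : Type*} [LinearOrder ι] {a : ι → ℝ} (ha : StrictAnti a)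
    {A : Finset ι} {k : ℕ} (hk : 0 < k) (hkA : k ≤ #A) (m : ι) :
    a m < kthLargest (A.image a) k ↔ k ≤ #{x ∈ A | x < m} := by
  rw [lt_kthLargest_iff hk (by rwa [card_image_of_injective _ ha.injective]), filter_image,
    card_image_of_injective _ ha.injective]
  simp only [ha.lt_iff_gt]

theorem lt_iff_of_threshold {X Y c : ℝ} {P : Prop} (hX : c < X ↔ P) (hY : c < Y ↔ ¬P) :
    Y < X ↔ P := by
  by_cases hP : P
  · exact iff_of_true ((not_lt.1 (mt hY.1 (not_not.2 hP))).trans_lt (hX.2 hP)) hP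
  · exact iff_of_false (not_lt.2 ((not_lt.1 (mt hX.1 hP)).trans (hY.2 hP).le)) hP

theorem kthLargest_true_gt_kthLargest_false_iff {N i j : ℕ} {a : Fin N → ℝ} (ha : StrictAnti a)
    (f : Fin N → Bool) (hm : i + j + 1 < N) (hA : i + 1 ≤ #{x | f x = true})
    (hB : j + 1 ≤ #{x | f x = false}) :
    kthLargest ((univ.filter (fun x => f x = true)).image a) (i + 1) >
        kthLargest ((univ.filter (fun x => f x = false)).image a) (j + 1) ↔
      i + 1 ≤ #{x : Fin N | (x : ℕ) < i + j + 1 ∧ f x = true} := by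
  set m : Fin N := ⟨i + j + 1, hm⟩
  have hsplit : #{x ∈ univ.filter (fun x => f x = true) | x < m} +
      #{x ∈ univ.filter (fun x => f x = false) | x < m} = i + j + 1 := by
    have hfalse : univ.filter (fun x => f x = false) = univ.filter (fun x => ¬ f x = true) := by
      simp only [Bool.not_eq_true]
    rw [hfalse, filter_comm, filter_comm (p := fun x => ¬ f x = true),
      card_filter_add_card_filter_not, filter_gt_eq_Iio, Fin.card_Iio]
  have hcount : #{x ∈ univ.filter (fun x => f x = true) | x < m} =
      #{x : Fin N | (x : ℕ) < i + j + 1 ∧ f x = true} := by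
    rw [filter_filter]
    simp only [and_comm, Fin.lt_def]
    rfl
  apply lt_iff_of_threshold (c := a m)
  · rw [lt_kthLargest_image_iff ha (by omega) hA, hcount]
  · rw [lt_kthLargest_image_iff ha (by omega) hB]
    omega

theorem uniformPr_comp_equiv {α β : Type*} [Fintype α] [Fintype β] (e : α ≃ β) (E : β → Prop) :
    uniformPr (fun x => E (e x)) = uniformPr E := by
  rw [uniformPr, uniformPr, Fintype.card_congr e, ← Fintype.card_subtype, ← Fintype.card_subtype,
    Fintype.card_congr (e.subtypeEquiv fun _ => Iff.rfl)]

theorem uniformPr_prod_fst {α β : Type*} [Fintype α] [Fintype β] [Nonempty β] (E : α → Prop) :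
    uniformPr (fun p : α × β => E p.1) = uniformPr E := by
  have hβ : (Fintype.card β : ℝ) ≠ 0 := by exact_mod_cast Fintype.card_ne_zero
  have hprod : univ.filter (fun p : α × β => E p.1) = univ.filter E ×ˢ univ := by
    ext; simp
  rw [uniformPr, uniformPr, hprod, card_product, card_univ, Fintype.card_prod]
  push_cast
  exact mul_div_mul_right _ _ hβ

theorem two_mul_card_filter_eq {α : Type*} [Fintype α] {pair : α → α}
    (hpair : Function.Involutive pair) {f : α → Bool} (hf : ∀ x, f (pair x) = !f x) (b : Bool) :
    2 * #{x | f x = b} = Fintype.card α := by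
  have hswap : #{x | f x = b} = #{x | ¬f x = b} :=
    card_bij' (fun x _ => pair x) (fun x _ => pair x) (by simp [hf])
      (by simp [hf, Bool.eq_not_iff])
      (fun x _ => hpair x) (fun x _ => hpair x)
  rw [two_mul, ← card_univ]
  nth_rewrite 2 [hswap]
  exact card_filter_add_card_filter_not _

section Antisymmetric

variable {α : Type*} [LinearOrder α] {pair : α → α}

theorem pair_lt_of_not_lt (hpair : Function.Involutive pair) (hfix : ∀ x, pair x ≠ x) {x : α}
    (hx : ¬x < pair x) : pair x < pair (pair x) := by
  rw [hpair x]
  exact lt_of_le_of_ne (not_lt.1 hx) (hfix x)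

def antisymmetricEquiv (hpair : Function.Involutive pair) (hfix : ∀ x, pair x ≠ x) :
    {f : α → Bool // ∀ x, f (pair x) = !f x} ≃ ({x // x < pair x} → Bool) where
  toFun f x := f.1 x
  invFun g := ⟨fun x => if h : x < pair x then g ⟨x, h⟩
      else !g ⟨pair x, pair_lt_of_not_lt hpair hfix h⟩, fun x => by
    by_cases h : x < pair x
    · have h' : ¬pair x < x := asymm h
      simp only [dif_pos h, hpair x, dif_neg h']
    · simp only [dif_neg h, dif_pos (pair_lt_of_not_lt hpair hfix h), Bool.not_not]⟩
  left_inv f := by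
    ext x
    by_cases h : x < pair x
    · simp only [dif_pos h]
    · simp only [dif_neg h, f.2 x, Bool.not_not]
  right_inv g := by
    funext x
    simp only [dif_pos x.2]

theorem uniformPr_comp_restrict [Fintype α] (hpair : Function.Involutive pair)
    (hfix : ∀ x, pair x ≠ x) {q : α → Prop} (hq : ∀ x, q x → x < pair x)
    (E : ({x // q x} → Bool) → Prop) :
    uniformPr (fun f : {f : α → Bool // ∀ x, f (pair x) = !f x} => E (fun x => f.1 x)) =
      uniformPr E := by
  let e := (antisymmetricEquiv hpair hfix).trans
    (Equiv.piEquivPiSubtypeProd (fun x : {x // x < pair x} => q x.1) fun _ => Bool)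
  let r : ({x : {x // x < pair x} // q x.1} → Bool) ≃ ({x // q x} → Bool) :=
    (Equiv.subtypeSubtypeEquivSubtype fun {x} => hq x).arrowCongr (Equiv.refl Bool)
  calc _ = uniformPr (fun f => E (r (e f).1)) := rfl
    _ = uniformPr (fun p : _ × _ => E (r p.1)) :=
      uniformPr_comp_equiv e (fun p => E (r p.1))
    _ = uniformPr (fun g => E (r g)) := uniformPr_prod_fst (fun g => E (r g))
    _ = uniformPr E := uniformPr_comp_equiv r E

end Antisymmetric

theorem sum_range_choose_succ (i j : ℕ) :
    ∑ l ∈ range (j + 2), (i + j + 2).choose (i + 1 + l) =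
      2 * ∑ l ∈ range (j + 1), (i + j + 1).choose (i + 1 + l) + (i + j + 1).choose (j + 1) := by
  have hpascal : ∀ l, (i + j + 2).choose (i + 1 + l) =
      (i + j + 1).choose (i + l) + (i + j + 1).choose (i + 1 + l) := fun l => by
    rw [show i + 1 + l = i + l + 1 by ring]
    exact Nat.choose_succ_succ' _ _
  rw [sum_congr rfl fun l _ => hpascal l, sum_add_distrib, sum_range_succ',
    sum_range_succ (fun l => (i + j + 1).choose (i + 1 + l)),
    Nat.choose_eq_zero_of_lt (by omega : i + j + 1 < i + 1 + (j + 1)), add_zero, add_zero,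
    Nat.choose_symm_of_eq_add (by ring : i + j + 1 = i + (j + 1)),
    sum_congr rfl fun l _ => by rw [show i + (l + 1) = i + 1 + l by ring]]
  ring

theorem sum_range_choose_div_two_pow (i j : ℕ) :
    (∑ l ∈ range (j + 1), ((i + j + 1).choose (i + 1 + l) : ℝ)) / 2 ^ (i + j + 1) =
      ∑ k ∈ range (j + 1), ((i + k).choose k : ℝ) / 2 ^ (i + k + 1) := by
  induction j with
  | zero => simp
  | succ j ih =>
    rw [sum_range_succ (fun k => ((i + k).choose k : ℝ) / 2 ^ (i + k + 1)), ← ih,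
      show i + (j + 1) + 1 = i + j + 2 by ring]
    rw_mod_cast [sum_range_choose_succ]
    push_cast
    rw [pow_succ]
    field_simp
    simp only [add_assoc]

theorem card_filter_succ_le_card_eq_sum_choose {ι : Type*} [Fintype ι] {i j : ℕ}
    (hι : Fintype.card ι = i + j + 1) :
    #{s : Finset ι | i + 1 ≤ #s} = ∑ l ∈ range (j + 1), (i + j + 1).choose (i + 1 + l) := by
  rw [card_filter, ← powerset_univ, sum_powerset_apply_card (fun c => if i + 1 ≤ c then 1 else 0),
    card_univ, hι, show i + j + 1 + 1 = (i + 1) + (j + 1) by ring, sum_range_add]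
  rw [sum_eq_zero fun c hc => by simp [not_le.2 (mem_range.1 hc)]]
  simp

theorem uniformPr_succ_le_card_true {ι : Type*} [Fintype ι] [DecidableEq ι] {i j : ℕ}
    (hι : Fintype.card ι = i + j + 1) :
    uniformPr (fun g : ι → Bool => i + 1 ≤ #{x | g x = true}) =
      ∑ k ∈ range (j + 1), ((i + k).choose k : ℝ) / 2 ^ (i + k + 1) := by
  let e : Finset ι ≃ (ι → Bool) :=
    { toFun s x := decide (x ∈ s)
      invFun g := {x | g x = true}
      left_inv s := by ext; simp
      right_inv g := by ext; simp }
  have hcard : ∀ s : Finset ι, #{x | e s x = true} = #s := fun s => by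
    congr 1; ext; simp [e]
  rw [← uniformPr_comp_equiv e, ← sum_range_choose_div_two_pow]
  simp only [hcard, uniformPr, card_filter_succ_le_card_eq_sum_choose hι, Fintype.card_finset, hι]
  push_cast
  rfl

theorem no_pairs_cross_rank_probability (n i j : ℕ)
    (hi : i + 1 ≤ n) (hj : j + 1 ≤ n)
    (a : Fin (2 * n) → ℝ) (ha : StrictAnti a)
    (pair : Fin (2 * n) → Fin (2 * n))
    (hinv : ∀ x, pair (pair x) = x) (hnf : ∀ x, pair x ≠ x)
    (htop : ∀ x : Fin (2 * n), (x : ℕ) < i + j + 1 → i + j + 1 ≤ ((pair x : ℕ))) :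
    uniformPr (fun f : {f : Fin (2 * n) → Bool // ∀ x, f (pair x) = !(f x)} =>
        kthLargest ((Finset.univ.filter (fun x => f.1 x = true)).image a) (i + 1) >
          kthLargest ((Finset.univ.filter (fun x => f.1 x = false)).image a) (j + 1)) =
      ∑ k ∈ Finset.range (j + 1), (Nat.choose (i + k) k : ℝ) / 2 ^ (i + k + 1) := by
  let top : Fin (2 * n) → Prop := fun x => (x : ℕ) < i + j + 1
  have htop_card : Fintype.card {x // top x} = i + j + 1 := by
    rw [Fintype.card_subtype, Fin.card_filter_val_lt]
    omega
  have hevent : ∀ f : {f : Fin (2 * n) → Bool // ∀ x, f (pair x) = !(f x)},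
      kthLargest ((univ.filter (fun x => f.1 x = true)).image a) (i + 1) >
          kthLargest ((univ.filter (fun x => f.1 x = false)).image a) (j + 1) ↔
        i + 1 ≤ #{x : {x // top x} | f.1 x = true} := fun f => by
    have htrue := two_mul_card_filter_eq hinv f.2 true
    have hfalse := two_mul_card_filter_eq hinv f.2 false
    rw [Fintype.card_fin] at htrue hfalse
    rw [kthLargest_true_gt_kthLargest_false_iff ha f.1 (by omega) (by omega) (by omega),
      ← Fintype.card_subtype, ← Fintype.card_subtype,
      ← Fintype.card_congr (Equiv.subtypeSubtypeEquivSubtypeInter top _)]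
  calc _ = uniformPr (fun f : {f : Fin (2 * n) → Bool // ∀ x, f (pair x) = !(f x)} =>
        i + 1 ≤ #{x : {x // top x} | f.1 x = true}) := by simp only [hevent]
    _ = uniformPr (fun g : {x // top x} → Bool => i + 1 ≤ #{x | g x = true}) := by
      -- `convert` identifies the decidability instances found for `Fin` with the generic ones.
      convert uniformPr_comp_restrict hinv hnf (q := top)
        (fun x hx => Fin.lt_def.2 (hx.trans_le (htop x hx))) (fun g => i + 1 ≤ #{x | g x = true})
        using 2
    _ = _ := uniformPr_succ_le_card_true htop_card
end

section
/- For every ε > 0 and natural numbers n, m, there exists N such that for every function f : {(t, T) : t ∈ T ⊆ [N]} → [0,1], there is a subset S ⊆ [N] with |S| = n such that for all T_1, T_2 ⊆ S with |T_1| = |T_2| ≤ m and every i ≤ |T_1|, we have |f(t_{i,1}, T_1) − f(t_{i,2}, T_2)| ≤ ε, where t_{i,j} denotes the i-th largest element of T_j. -/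
/-- The `k`-th largest element (1-indexed) of a finite set of naturals, defaulting to `0`. -/
def kthLargestNat (T : Finset ℕ) (k : ℕ) : ℕ :=
  ((T.sort (· ≤ ·)).reverse).getD (k - 1) 0

lemma kthLargestNat_mem {T : Finset ℕ} {i : ℕ} (h1 : 1 ≤ i) (h2 : i ≤ T.card) :
    kthLargestNat T i ∈ T := by
  have hlen : (T.sort (· ≤ ·)).reverse.length = T.card := by
    simp [Finset.length_sort]
  have hidx : i - 1 < (T.sort (· ≤ ·)).reverse.length := by omega
  have hmem : kthLargestNat T i ∈ (T.sort (· ≤ ·)).reverse := by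
    rw [kthLargestNat, List.getD_eq_getElem _ _ hidx]
    exact List.getElem_mem _
  rw [List.mem_reverse, Finset.mem_sort] at hmem
  exact hmem

/-- Finite hypergraph Ramsey theorem. -/
theorem ramseyU (κ : Type) [Fintype κ] [DecidableEq κ] :
    ∀ k n : ℕ, ∃ L : ℕ, ∀ (A : Finset ℕ) (c : Finset ℕ → κ), L ≤ A.card →
      ∃ S : Finset ℕ, S ⊆ A ∧ S.card = n ∧
        ∀ T T' : Finset ℕ, T ⊆ S → T' ⊆ S → T.card = k → T'.card = k → c T = c T' := by
  intro k
  induction k with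
  | zero =>
    intro n
    refine ⟨n, fun A c hA => ?_⟩
    obtain ⟨S, hS, hcard⟩ := Finset.exists_subset_card_eq hA
    refine ⟨S, hS, hcard, fun T T' _ _ hT hT' => ?_⟩
    rw [Finset.card_eq_zero] at hT hT'
    rw [hT, hT']
  | succ k IH =>
    -- inner lemma: min-determined coloring
    have inner : ∀ j : ℕ, ∃ L : ℕ, ∀ (A : Finset ℕ) (c : Finset ℕ → κ), L ≤ A.card →
        ∃ S : Finset ℕ, S ⊆ A ∧ S.card = j ∧ ∃ d : ℕ → κ,
          ∀ T : Finset ℕ, T ⊆ S → T.card = k + 1 →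
            ∀ (hne : T.Nonempty), c T = d (T.min' hne) := by
      intro j
      induction j with
      | zero =>
        refine ⟨0, fun A c _ => ⟨∅, Finset.empty_subset A, Finset.card_empty, fun _ => c ∅,
          fun T hT hc _ => ?_⟩⟩
        have := Finset.subset_empty.mp hT
        simp [this] at hc
      | succ j jIH =>
        obtain ⟨Lj, hLj⟩ := jIH
        obtain ⟨LR, hLR⟩ := IH (max Lj k)
        refine ⟨LR + 1, fun A c hA => ?_⟩
        have hAne : A.Nonempty := Finset.card_pos.mp (by omega)
        set a := A.min' hAne with ha_def
        have haA : a ∈ A := A.min'_mem hAne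
        have hcard_erase : LR ≤ (A.erase a).card := by
          rw [Finset.card_erase_of_mem haA]; omega
        obtain ⟨S₁, hS₁sub, hS₁card, hS₁mono⟩ :=
          hLR (A.erase a) (fun T => c (insert a T)) hcard_erase
        obtain ⟨S', hS'sub, hS'card, d', hd'⟩ :=
          hLj S₁ c (by rw [hS₁card]; exact le_max_left _ _)
        have haS' : a ∉ S' := fun h => (Finset.mem_erase.mp (hS₁sub (hS'sub h))).1 rfl
        have halt : ∀ x ∈ S', a < x := by
          intro x hx
          have hxA := Finset.mem_erase.mp (hS₁sub (hS'sub hx))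
          exact lt_of_le_of_ne (A.min'_le x hxA.2) (Ne.symm hxA.1)
        obtain ⟨T₀, hT₀sub, hT₀card⟩ :=
          Finset.exists_subset_card_eq (show k ≤ S₁.card by rw [hS₁card]; exact le_max_right _ _)
        refine ⟨insert a S',
          Finset.insert_subset haA (hS'sub.trans (hS₁sub.trans (Finset.erase_subset _ _))),
          by rw [Finset.card_insert_of_notMem haS', hS'card],
          fun x => if x = a then c (insert a T₀) else d' x, ?_⟩
        intro T hTsub hTcard hne
        by_cases haT : a ∈ T
        · have hmin : T.min' hne = a := by
            refine le_antisymm (Finset.min'_le T a haT) (Finset.le_min' _ _ _ fun y hy => ?_)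
            rcases Finset.mem_insert.mp (hTsub hy) with h | h
            · omega
            · exact (halt y h).le
          have hTe : T.erase a ⊆ S' := by
            intro x hx
            have hx' := Finset.mem_erase.mp hx
            rcases Finset.mem_insert.mp (hTsub hx'.2) with h | h
            · exact absurd h hx'.1
            · exact h
          have hkey : c (insert a (T.erase a)) = c (insert a T₀) :=
            hS₁mono (T.erase a) T₀ (hTe.trans hS'sub) hT₀sub
              (by rw [Finset.card_erase_of_mem haT, hTcard]; omega) hT₀card
          rw [Finset.insert_erase haT] at hkey
          rw [hmin]
          show c T = if a = a then c (insert a T₀) else d' a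
          rw [if_pos rfl]
          exact hkey
        · have hTS' : T ⊆ S' := fun x hx =>
            (Finset.mem_insert.mp (hTsub hx)).resolve_left (fun h => haT (h ▸ hx))
          have hminS' : T.min' hne ∈ S' := hTS' (T.min'_mem hne)
          have hna : T.min' hne ≠ a := fun h => absurd (halt _ hminS') (by omega)
          show c T = if T.min' hne = a then c (insert a T₀) else d' (T.min' hne)
          rw [if_neg hna]
          exact hd' T hTS' hTcard hne
    -- pigeonhole step
    intro n
    obtain ⟨L, hL⟩ := inner (Fintype.card κ * (n - 1) + 1)
    refine ⟨L, fun A c hA => ?_⟩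
    obtain ⟨S, hSsub, hScard, d, hd⟩ := hL A c hA
    have hlt : (Finset.univ : Finset κ).card * (n - 1) < S.card := by
      rw [hScard, Finset.card_univ]; omega
    obtain ⟨y, -, hy⟩ := Finset.exists_lt_card_fiber_of_mul_lt_card_of_maps_to
      (f := d) (fun x _ => Finset.mem_univ (d x)) hlt
    obtain ⟨Sf, hSfsub, hSfcard⟩ :=
      Finset.exists_subset_card_eq (show n ≤ (S.filter fun x => d x = y).card by omega)
    refine ⟨Sf, (hSfsub.trans (Finset.filter_subset _ _)).trans hSsub, hSfcard, ?_⟩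
    have key : ∀ U : Finset ℕ, U ⊆ Sf → U.card = k + 1 → c U = y := by
      intro U hU hcU
      have hne : U.Nonempty := Finset.card_pos.mp (by omega)
      have hmem := hSfsub (hU (U.min'_mem hne))
      have hdy := (Finset.mem_filter.mp hmem).2
      rw [hd U (hU.trans ((hSfsub.trans (Finset.filter_subset _ _)))) hcU hne, hdy]
    intro T T' hT hT' hcT hcT'
    rw [key T hT hcT, key T' hT' hcT']

/-- Multi-size version: monochromatic for all cardinalities up to `m`. -/
theorem ramseyM (κ : Type) [Fintype κ] [DecidableEq κ] :
    ∀ m n : ℕ, ∃ L : ℕ, ∀ (A : Finset ℕ) (c : Finset ℕ → κ), L ≤ A.card →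
      ∃ S : Finset ℕ, S ⊆ A ∧ S.card = n ∧
        ∀ T T' : Finset ℕ, T ⊆ S → T' ⊆ S → T.card = T'.card → T.card ≤ m → c T = c T' := by
  intro m
  induction m with
  | zero =>
    intro n
    refine ⟨n, fun A c hA => ?_⟩
    obtain ⟨S, hS, hcard⟩ := Finset.exists_subset_card_eq hA
    refine ⟨S, hS, hcard, fun T T' _ _ hcc hcm => ?_⟩
    have h1 : T = ∅ := Finset.card_eq_zero.mp (by omega)
    have h2 : T' = ∅ := Finset.card_eq_zero.mp (by omega)
    rw [h1, h2]
  | succ m IHm =>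
    intro n
    obtain ⟨L', hL'⟩ := IHm n
    obtain ⟨L, hL⟩ := ramseyU κ (m + 1) L'
    refine ⟨L, fun A c hA => ?_⟩
    obtain ⟨S₁, hS₁sub, hS₁card, hS₁mono⟩ := hL A c hA
    obtain ⟨S, hSsub, hScard, hSmono⟩ := hL' S₁ c (le_of_eq hS₁card.symm)
    refine ⟨S, hSsub.trans hS₁sub, hScard, fun T T' hT hT' hcc hcm => ?_⟩
    rcases Nat.lt_or_ge T.card (m + 1) with h | h
    · exact hSmono T T' hT hT' hcc (by omega)
    · exact hS₁mono T T' (hT.trans hSsub) (hT'.trans hSsub) (by omega) (by omega)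

theorem ramsey_uniformization (ε : ℝ) (hε : 0 < ε) (n m : ℕ) :
    ∃ N : ℕ, ∀ f : ℕ → Finset ℕ → ℝ,
      (∀ t T, t ∈ T → T ⊆ Finset.Icc 1 N → f t T ∈ Set.Icc (0 : ℝ) 1) →
      ∃ S : Finset ℕ, S ⊆ Finset.Icc 1 N ∧ S.card = n ∧
        ∀ T₁ T₂ : Finset ℕ, T₁ ⊆ S → T₂ ⊆ S → T₁.card = T₂.card → T₁.card ≤ m →
          ∀ i, 1 ≤ i → i ≤ T₁.card →
            |f (kthLargestNat T₁ i) T₁ - f (kthLargestNat T₂ i) T₂| ≤ ε := by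
  set K : ℕ := ⌊1 / ε⌋₊ with hK
  obtain ⟨L, hL⟩ := ramseyM (Fin m → Fin (K + 1)) m n
  refine ⟨L, fun f hf => ?_⟩
  set c : Finset ℕ → (Fin m → Fin (K + 1)) := fun T i =>
    ⟨min (⌊f (kthLargestNat T (i.1 + 1)) T / ε⌋₊) K, Nat.lt_succ_of_le (min_le_right _ _)⟩
    with hc
  have hAcard : L ≤ (Finset.Icc 1 L).card := by rw [Nat.card_Icc]; omega
  obtain ⟨S, hSsub, hScard, hSmono⟩ := hL (Finset.Icc 1 L) c hAcard
  refine ⟨S, hSsub, hScard, ?_⟩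
  intro T₁ T₂ hT₁ hT₂ hcc hcm i hi1 hi2
  have hi2' : i ≤ T₂.card := by omega
  have hceq := hSmono T₁ T₂ hT₁ hT₂ hcc hcm
  have him : i - 1 < m := by omega
  have hfin := congrFun hceq ⟨i - 1, him⟩
  have hval := congrArg Fin.val hfin
  simp only [hc] at hval
  have hi' : i - 1 + 1 = i := by omega
  rw [hi'] at hval
  set x := f (kthLargestNat T₁ i) T₁ with hx_def
  set y := f (kthLargestNat T₂ i) T₂ with hy_def
  have hxm : x ∈ Set.Icc (0 : ℝ) 1 :=
    hf _ T₁ (kthLargestNat_mem hi1 hi2) (hT₁.trans hSsub)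
  have hym : y ∈ Set.Icc (0 : ℝ) 1 :=
    hf _ T₂ (kthLargestNat_mem hi1 hi2') (hT₂.trans hSsub)
  obtain ⟨hx0, hx1⟩ := hxm
  obtain ⟨hy0, hy1⟩ := hym
  have hdivx : x / ε ≤ 1 / ε := by gcongr
  have hdivy : y / ε ≤ 1 / ε := by gcongr
  have hxK : ⌊x / ε⌋₊ ≤ K := Nat.floor_le_floor hdivx
  have hyK : ⌊y / ε⌋₊ ≤ K := Nat.floor_le_floor hdivy
  rw [min_eq_left hxK, min_eq_left hyK] at hval
  have hx0' : (0 : ℝ) ≤ x / ε := by positivity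
  have hy0' : (0 : ℝ) ≤ y / ε := by positivity
  have hfx1 : (⌊x / ε⌋₊ : ℝ) ≤ x / ε := Nat.floor_le hx0'
  have hfx2 : x / ε < ⌊x / ε⌋₊ + 1 := Nat.lt_floor_add_one _
  have hfy1 : (⌊y / ε⌋₊ : ℝ) ≤ y / ε := Nat.floor_le hy0'
  have hfy2 : y / ε < ⌊y / ε⌋₊ + 1 := Nat.lt_floor_add_one _
  have hcast : (⌊x / ε⌋₊ : ℝ) = (⌊y / ε⌋₊ : ℝ) := by exact_mod_cast congrArg Nat.cast hval
  have hxe : x / ε * ε = x := div_mul_cancel₀ x (ne_of_gt hε)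
  have hye : y / ε * ε = y := div_mul_cancel₀ y (ne_of_gt hε)
  rw [abs_sub_le_iff]
  constructor <;> nlinarith [hfx1, hfx2, hfy1, hfy2, hcast, hxe, hye, hε]
end

section
/- Let S be an integer random variable with log-concave PMF, and let (A_k, B_k) satisfy B_{k+1} ≤ B_k and A_{k+1} + B_{k+1} = A_k + B_k + 1. Then the ratio r_k = (B_k + 1) Pr[S = A_k + B_k + 1] / (2 Pr[S = A_k + B_k]) is non-increasing in k (whenever the denominators are nonzero). -/
theorem ratio_nonincreasing (m : ℤ → ℝ) (hnonneg : ∀ c, 0 ≤ m c)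
    (hlogconcave : ∀ c : ℤ, m (c - 1) * m (c + 1) ≤ m c ^ 2)
    (A B : ℕ → ℕ) (hB : ∀ k, B (k + 1) ≤ B k)
    (hAB : ∀ k, A (k + 1) + B (k + 1) = A k + B k + 1) (k : ℕ)
    (hden : m ((A k + B k : ℕ) : ℤ) ≠ 0)
    (hden' : m ((A (k + 1) + B (k + 1) : ℕ) : ℤ) ≠ 0) :
    ((B (k + 1) : ℝ) + 1) * m (((A (k + 1) + B (k + 1) : ℕ) : ℤ) + 1) /
        (2 * m ((A (k + 1) + B (k + 1) : ℕ) : ℤ)) ≤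
      ((B k : ℝ) + 1) * m (((A k + B k : ℕ) : ℤ) + 1) / (2 * m ((A k + B k : ℕ) : ℤ)) := by
  set n : ℤ := ((A k + B k : ℕ) : ℤ) with hn
  have hcast : ((A (k + 1) + B (k + 1) : ℕ) : ℤ) = n + 1 := by
    rw [hAB k, hn]; push_cast; ring
  rw [hcast]
  have h0 : 0 < m n := (hnonneg n).lt_of_ne (Ne.symm hden)
  have h1 : 0 < m (n + 1) := by
    have := hnonneg (n + 1)
    rw [hcast] at hden'
    exact this.lt_of_ne (Ne.symm hden')
  have h2 : 0 ≤ m (n + 1 + 1) := hnonneg _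
  have hlc : m n * m (n + 1 + 1) ≤ m (n + 1) ^ 2 := by
    have := hlogconcave (n + 1)
    simpa using this
  have hBle : ((B (k + 1) : ℝ) + 1) ≤ (B k : ℝ) + 1 := by
    have := hB k; exact_mod_cast Nat.succ_le_succ this
  have hBpos : (0 : ℝ) ≤ (B (k + 1) : ℝ) + 1 := by positivity
  rw [div_le_div_iff₀ (by positivity) (by positivity)]
  nlinarith [mul_le_mul hBle hlc (by positivity) (by positivity)]
end
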